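/- Let ū₀ ∈ W²,∞_loc(0,∞) be globally Lipschitz continuous with (ū₀)_r ∈ W^{1,∞}(0,∞) or κ_{ū₀} ∈ L∞(0,∞), and assume the compatibility condition: there exist C, r₀ > 0 such that |c + κ_{ū₀}(r)| ≤ C·r for almost every 0 < r ≤ r₀. Then there exists a constant C̄ > 0 such that ū⁺(t,r) := ū₀(r) + C̄·t is a viscosity super-solution and ū⁻(t,r) := ū₀(r) − C̄·t is a viscosity sub-solution of (E) on [0,∞)×(0,∞) with initial datum ū₀. -/

import Mathlib

open Set Real Filter
open scoped ENNReal ContDiff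

noncomputable def Fbar (c r q Y : ℝ) : ℝ :=
  c * Real.sqrt (1 + r ^ 2 * q ^ 2) + q * ((2 + r ^ 2 * q ^ 2) / (1 + r ^ 2 * q ^ 2)) +
    r * Y / (1 + r ^ 2 * q ^ 2)

def Dom (T : ℝ≥0∞) : Set (ℝ × ℝ) :=
  {p : ℝ × ℝ | 0 ≤ p.1 ∧ ENNReal.ofReal p.1 < T ∧ 0 < p.2}

noncomputable def Dt (φ : ℝ × ℝ → ℝ) (t r : ℝ) : ℝ := deriv (fun s => φ (s, r)) t

noncomputable def Dr (φ : ℝ × ℝ → ℝ) (t r : ℝ) : ℝ := deriv (fun ρ => φ (t, ρ)) r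

noncomputable def Drr (φ : ℝ × ℝ → ℝ) (t r : ℝ) : ℝ :=
  deriv (fun ρ => deriv (fun ρ' => φ (t, ρ')) ρ) r

def IsSubSol (c : ℝ) (T : ℝ≥0∞) (u0 : ℝ → ℝ) (u : ℝ → ℝ → ℝ) : Prop :=
  UpperSemicontinuousOn (fun p : ℝ × ℝ => u p.1 p.2) (Dom T) ∧
  ∀ φ : ℝ × ℝ → ℝ, ContDiff ℝ 2 φ → ∀ t r : ℝ, (t, r) ∈ Dom T →
    IsLocalMaxOn (fun p : ℝ × ℝ => u p.1 p.2 - φ p) (Dom T) (t, r) →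
    (0 < t → r * Dt φ t r ≤ Fbar c r (Dr φ t r) (Drr φ t r)) ∧
    (t = 0 → u 0 r ≤ u0 r)

def IsSuperSol (c : ℝ) (T : ℝ≥0∞) (u0 : ℝ → ℝ) (u : ℝ → ℝ → ℝ) : Prop :=
  LowerSemicontinuousOn (fun p : ℝ × ℝ => u p.1 p.2) (Dom T) ∧
  ∀ φ : ℝ × ℝ → ℝ, ContDiff ℝ 2 φ → ∀ t r : ℝ, (t, r) ∈ Dom T →
    IsLocalMinOn (fun p : ℝ × ℝ => u p.1 p.2 - φ p) (Dom T) (t, r) →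
    (0 < t → Fbar c r (Dr φ t r) (Drr φ t r) ≤ r * Dt φ t r) ∧
    (t = 0 → u0 r ≤ u 0 r)

def IsSol (c : ℝ) (T : ℝ≥0∞) (u0 : ℝ → ℝ) (u : ℝ → ℝ → ℝ) : Prop :=
  ContinuousOn (fun p : ℝ × ℝ => u p.1 p.2) (Dom T) ∧
  IsSubSol c T u0 u ∧ IsSuperSol c T u0 u

def W2Loc (u0 : ℝ → ℝ) : Prop :=
  (∀ r : ℝ, 0 < r → DifferentiableAt ℝ u0 r) ∧
  ∀ r : ℝ, 0 < r → ∃ ε > (0:ℝ), ∃ L : NNReal, LipschitzOnWith L (deriv u0) (Metric.ball r ε)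

noncomputable def kappa (u0 : ℝ → ℝ) (r : ℝ) : ℝ :=
  deriv u0 r * ((2 + (r * deriv u0 r) ^ 2) / (1 + (r * deriv u0 r) ^ 2) ^ ((3:ℝ)/2)) +
    r * deriv (deriv u0) r / (1 + (r * deriv u0 r) ^ 2) ^ ((3:ℝ)/2)

def KappaBdd (u0 : ℝ → ℝ) (K : ℝ) : Prop :=
  ∀ r : ℝ, 0 < r → DifferentiableAt ℝ (deriv u0) r → |kappa u0 r| ≤ K


/-- `(ū₀)_r ∈ W^{1,∞}(0,∞)`: the derivative is bounded and (globally) Lipschitz on `(0,∞)`. -/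
def DerivW1inf (u0 : ℝ → ℝ) : Prop :=
  (∃ M : ℝ, ∀ r : ℝ, 0 < r → |deriv u0 r| ≤ M) ∧
  ∃ L : NNReal, LipschitzOnWith L (deriv u0) (Set.Ioi 0)

/-- Compatibility condition: `|c + κ_{ū₀}(r)| ≤ C r` for (a.e.) `0 < r ≤ r₀`. -/
def Compat (c : ℝ) (u0 : ℝ → ℝ) (C r0 : ℝ) : Prop :=
  ∀ r : ℝ, 0 < r → r ≤ r0 → DifferentiableAt ℝ (deriv u0) r → |c + kappa u0 r| ≤ C * r

/-!
`ū₀ + C̄ t` is a super-solution as soon as `ū₀` is a viscosity super-solution of the stationary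
equation `F̄(r, ū_r, ū_rr) = C̄ r`, because a test function touching it has time derivative `C̄`.
As `F̄` is increasing in `ū_rr`, it suffices to bound `ū_rr` from above near each `r > 0`: a `C²`
function touching `ū₀` from below inherits the a.e. bound (otherwise `ū₀ - ψ` would be uniformly
concave near the touching point, by the fundamental theorem of calculus for the Lipschitz `ū_r`).
Near `0` the compatibility condition `κ ≤ C r - c` gives `F̄ = C r √(1 + r² ū_r²)`; away from `0`,
`|κ| ≤ K` or `|ū_rr| ≤ L` makes `F̄` at most affine in `r`. The sub-solution follows by applying
this to `-ū₀` and `-c`, since `F̄` is odd in `(c, ū_r, ū_rr)`.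
-/

open MeasureTheory Metric Topology

theorem LipschitzOnWith.sub_le_mul_of_deriv_le {g : ℝ → ℝ} {K : NNReal} {a b M : ℝ}
    (hab : a ≤ b) (hg : LipschitzOnWith K g (Icc a b))
    (hM : ∀ x ∈ Ioo a b, DifferentiableAt ℝ g x → deriv g x ≤ M) :
    g b - g a ≤ M * (b - a) := by
  have hac : AbsolutelyContinuousOnInterval g a b :=
    LipschitzOnWith.absolutelyContinuousOnInterval (by rwa [uIcc_of_le hab])
  rw [← hac.integral_deriv_eq_sub]
  calc ∫ x in a..b, deriv g x ≤ ∫ _ in a..b, M := by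
        refine intervalIntegral.integral_mono_ae_restrict hab hac.intervalIntegrable_deriv
          intervalIntegrable_const ?_
        rw [EventuallyLE, Measure.restrict_congr_set Ioo_ae_eq_Icc.symm,
          ae_restrict_iff' measurableSet_Ioo]
        filter_upwards [hac.ae_differentiableAt] with x hdiff hx
        exact hM x hx (hdiff (uIcc_of_le hab ▸ Ioo_subset_Icc_self hx))
    _ = M * (b - a) := by simp [mul_comm]

theorem not_isLocalMin_of_deriv_le_neg {w g : ℝ → ℝ} {t : Set ℝ} {K : NNReal} {r δ : ℝ}
    (hδ : 0 < δ) (hw : ∀ᶠ s in 𝓝 r, HasDerivAt w (g s) s)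
    (ht : t ∈ 𝓝 r) (hg : LipschitzOnWith K g t)
    (hg' : ∀ᶠ s in 𝓝 r, DifferentiableAt ℝ g s → deriv g s ≤ -δ) :
    ¬ IsLocalMin w r := by
  intro hmin
  obtain ⟨ρ, hρ, hball⟩ :=
    eventually_nhds_iff_ball.mp (hw.and (hg'.and (Filter.Eventually.and ht hmin)))
  have hsub : Icc r (r + ρ / 2) ⊆ ball r ρ := by
    intro s hs
    rw [mem_ball, Real.dist_eq, abs_lt]
    constructor <;> linarith [hs.1, hs.2]
  have hderiv : ∀ s ∈ Icc r (r + ρ / 2), HasDerivAt w (g s) s := fun s hs => (hball s (hsub hs)).1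
  have hg0 : g r = 0 := hmin.hasDerivAt_eq_zero (hderiv r (left_mem_Icc.mpr (by linarith)))
  have hneg : ∀ s ∈ Ioc r (r + ρ / 2), g s < 0 := by
    intro s hs
    have hIcc : Icc r s ⊆ ball r ρ := fun x hx => hsub ⟨hx.1, hx.2.trans hs.2⟩
    have := (hg.mono fun x hx => (hball x (hIcc hx)).2.2.1).sub_le_mul_of_deriv_le hs.1.le
      fun x hx => (hball x (hIcc (Ioo_subset_Icc_self hx))).2.1
    nlinarith [hs.1]
  obtain ⟨ξ, hξ, hslope⟩ := exists_hasDerivAt_eq_slope w g (by linarith : r < r + ρ / 2)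
    (fun s hs => (hderiv s hs).continuousAt.continuousWithinAt)
    (fun s hs => hderiv s (Ioo_subset_Icc_self hs))
  have hle : w r ≤ w (r + ρ / 2) := (hball _ (hsub (right_mem_Icc.mpr (by linarith)))).2.2.2
  have := hneg ξ (Ioo_subset_Ioc_self hξ)
  rw [hslope, div_neg_iff] at this
  rcases this with ⟨_, h⟩ | ⟨h, _⟩ <;> linarith

theorem deriv_deriv_le_of_isLocalMin_sub {u ψ h : ℝ → ℝ} {r ε : ℝ} {L : NNReal} (hε : 0 < ε)
    (hu : ∀ᶠ s in 𝓝 r, DifferentiableAt ℝ u s) (hu' : LipschitzOnWith L (deriv u) (ball r ε))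
    (hbound : ∀ᶠ s in 𝓝 r, DifferentiableAt ℝ (deriv u) s → deriv (deriv u) s ≤ h s)
    (hh : ContinuousAt h r) (hψ : ContDiff ℝ 2 ψ) (hmin : IsLocalMin (fun s => u s - ψ s) r) :
    deriv (deriv ψ) r ≤ h r := by
  by_contra! hlt
  have hψ' : ContDiff ℝ 1 (deriv ψ) := ContDiff.deriv' (n := 1) hψ
  obtain ⟨K, t, ht, hψL⟩ := (hψ'.contDiffAt (x := r)).exists_lipschitzOnWith
  have hgap : ∀ᶠ s in 𝓝 r, h s - deriv (deriv ψ) s < -((deriv (deriv ψ) r - h r) / 2) :=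
    (hh.sub (hψ'.continuous_deriv le_rfl).continuousAt).eventually
      (gt_mem_nhds (by simp only [Pi.sub_apply]; linarith))
  refine not_isLocalMin_of_deriv_le_neg (g := fun s => deriv u s - deriv ψ s)
    (half_pos (sub_pos.2 hlt)) ?_ (inter_mem (ball_mem_nhds r hε) ht)
    ((hu'.mono inter_subset_left).sub (hψL.mono inter_subset_right)) ?_ hmin
  · filter_upwards [hu] with s hs using
      hs.hasDerivAt.sub (hψ.differentiable two_ne_zero s).hasDerivAt
  · filter_upwards [hbound, hgap] with s hbound hgap hdiff
    have hdψ' := hψ'.differentiable one_ne_zero s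
    have hdu : DifferentiableAt ℝ (deriv u) s :=
      (hdiff.add hdψ').congr_of_eventuallyEq (.of_forall fun x => by simp)
    rw [deriv_fun_sub hdu hdψ']
    linarith [hbound hdu]

theorem Fbar_monotone {c r q : ℝ} (hr : 0 < r) : Monotone (Fbar c r q) := by
  intro Y Y' hY
  unfold Fbar
  gcongr

theorem Fbar_neg (c r q Y : ℝ) : Fbar (-c) r (-q) (-Y) = -Fbar c r q Y := by
  unfold Fbar
  rw [neg_sq]
  ring

theorem sqrt_one_add_sq_mul_sq_le {r q L : ℝ} (hr : 0 ≤ r) (hq : |q| ≤ L) :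
    √(1 + r ^ 2 * q ^ 2) ≤ 1 + r * L := by
  have hL : 0 ≤ L := (abs_nonneg q).trans hq
  rw [sqrt_le_left (by positivity), ← sq_abs q]
  have h := mul_le_mul_of_nonneg_left hq hr
  nlinarith [mul_le_mul h h (by positivity) (by positivity), mul_nonneg hr hL]

theorem Fbar_le {c r q Y L : ℝ} (hr : 0 < r) (hq : |q| ≤ L) (hY : 0 ≤ Y) :
    Fbar c r q Y ≤ (|c| + 2 * L) + (|c| * L + Y) * r := by
  have hL : 0 ≤ L := (abs_nonneg q).trans hq
  have hW : 1 ≤ 1 + r ^ 2 * q ^ 2 := by nlinarith [sq_nonneg (r * q)]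
  have hsqrt : c * √(1 + r ^ 2 * q ^ 2) ≤ |c| * (1 + r * L) :=
    calc c * √(1 + r ^ 2 * q ^ 2) ≤ |c| * √(1 + r ^ 2 * q ^ 2) := by gcongr; exact le_abs_self c
      _ ≤ |c| * (1 + r * L) := by gcongr; exact sqrt_one_add_sq_mul_sq_le hr.le hq
  have hslope : q * ((2 + r ^ 2 * q ^ 2) / (1 + r ^ 2 * q ^ 2)) ≤ 2 * L := by
    have h2 : (2 + r ^ 2 * q ^ 2) / (1 + r ^ 2 * q ^ 2) ≤ 2 := by
      rw [div_le_iff₀ (by linarith)]; linarith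
    calc q * ((2 + r ^ 2 * q ^ 2) / (1 + r ^ 2 * q ^ 2))
        ≤ |q| * ((2 + r ^ 2 * q ^ 2) / (1 + r ^ 2 * q ^ 2)) := by gcongr; exact le_abs_self q
      _ ≤ L * 2 := by gcongr
      _ = 2 * L := mul_comm _ _
  have hcurv : r * Y / (1 + r ^ 2 * q ^ 2) ≤ r * Y := div_le_self (by positivity) hW
  unfold Fbar
  linarith

/-- The value of `ū_rr` at which the spiral curvature with `r = s`, `ū_r = q` equals `B`. -/
noncomputable def secondDerivOfCurvature (s q B : ℝ) : ℝ :=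
  (B * (1 + (s * q) ^ 2) ^ ((3 : ℝ) / 2) - q * (2 + (s * q) ^ 2)) / s

theorem deriv_deriv_le_of_kappa_le {u : ℝ → ℝ} {s B : ℝ} (hs : 0 < s) (h : kappa u s ≤ B) :
    deriv (deriv u) s ≤ secondDerivOfCurvature s (deriv u s) B := by
  have hP : 0 < (1 + (s * deriv u s) ^ 2) ^ ((3 : ℝ) / 2) := rpow_pos_of_pos (by positivity) _
  have hκ : kappa u s = (deriv u s * (2 + (s * deriv u s) ^ 2) + s * deriv (deriv u) s) /
      (1 + (s * deriv u s) ^ 2) ^ ((3 : ℝ) / 2) := by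
    rw [kappa]; ring
  rw [hκ, div_le_iff₀ hP] at h
  rw [secondDerivOfCurvature, le_div_iff₀ hs]
  linarith

theorem Fbar_secondDerivOfCurvature {c r q B : ℝ} (hr : 0 < r) :
    Fbar c r q (secondDerivOfCurvature r q B) = (c + B) * √(1 + r ^ 2 * q ^ 2) := by
  have hP : (1 + (r * q) ^ 2) ^ ((3 : ℝ) / 2) = (1 + r ^ 2 * q ^ 2) * √(1 + r ^ 2 * q ^ 2) := by
    rw [sqrt_eq_rpow, ← rpow_one_add' (by positivity) (by norm_num)]
    norm_num [mul_pow]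
  have hW : 0 < 1 + r ^ 2 * q ^ 2 := by positivity
  rw [Fbar, secondDerivOfCurvature, hP, mul_pow]
  field_simp
  ring

theorem ContinuousAt.secondDerivOfCurvature {g B : ℝ → ℝ} {r : ℝ} (hr : r ≠ 0)
    (hg : ContinuousAt g r) (hB : ContinuousAt B r) :
    ContinuousAt (fun s => secondDerivOfCurvature s (g s) (B s)) r := by
  unfold _root_.secondDerivOfCurvature
  fun_prop (disch := first | assumption | positivity)

/-- `u` is a viscosity super-solution of `F̄(r, u_r, u_rr) = C r` at `r`. -/
def IsStationarySuperSolAt (c C : ℝ) (u : ℝ → ℝ) (r : ℝ) : Prop :=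
  ∀ ψ : ℝ → ℝ, ContDiff ℝ 2 ψ → IsLocalMin (fun s => u s - ψ s) r →
    Fbar c r (deriv ψ r) (deriv (deriv ψ) r) ≤ C * r

theorem IsStationarySuperSolAt.mono {c C C' r : ℝ} {u : ℝ → ℝ}
    (h : IsStationarySuperSolAt c C u r) (hC : C ≤ C') (hr : 0 ≤ r) :
    IsStationarySuperSolAt c C' u r :=
  fun ψ hψ hmin => (h ψ hψ hmin).trans (mul_le_mul_of_nonneg_right hC hr)

theorem W2Loc.isStationarySuperSolAt {u h : ℝ → ℝ} {c C r : ℝ} (hu : W2Loc u) (hr : 0 < r)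
    (hh : ContinuousAt h r)
    (hbound : ∀ᶠ s in 𝓝 r, DifferentiableAt ℝ (deriv u) s → deriv (deriv u) s ≤ h s)
    (hF : Fbar c r (deriv u r) (h r) ≤ C * r) : IsStationarySuperSolAt c C u r := by
  intro ψ hψ hmin
  obtain ⟨ε, hε, L, hL⟩ := hu.2 r hr
  have hslope : deriv ψ r = deriv u r := by
    have h0 := hmin.deriv_eq_zero
    rw [deriv_fun_sub (hu.1 r hr) (hψ.differentiable two_ne_zero r)] at h0
    linarith
  rw [hslope]
  refine (Fbar_monotone hr ?_).trans hF
  exact deriv_deriv_le_of_isLocalMin_sub hε (eventually_of_mem (Ioi_mem_nhds hr) hu.1) hL hbound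
    hh hψ hmin

theorem W2Loc.isStationarySuperSolAt_of_kappa_le {u B : ℝ → ℝ} {c C r : ℝ} (hu : W2Loc u)
    (hr : 0 < r) (hB : ContinuousAt B r)
    (hbound : ∀ᶠ s in 𝓝 r, DifferentiableAt ℝ (deriv u) s → kappa u s ≤ B s)
    (hF : (c + B r) * √(1 + r ^ 2 * deriv u r ^ 2) ≤ C * r) :
    IsStationarySuperSolAt c C u r := by
  obtain ⟨ε, hε, L, hL⟩ := hu.2 r hr
  refine hu.isStationarySuperSolAt (h := fun s => secondDerivOfCurvature s (deriv u s) (B s)) hr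
    ((hL.continuousOn.continuousAt (ball_mem_nhds r hε)).secondDerivOfCurvature hr.ne' hB) ?_
    (by rwa [Fbar_secondDerivOfCurvature hr])
  filter_upwards [hbound, Ioi_mem_nhds hr] with s hs hs0 hd
  exact deriv_deriv_le_of_kappa_le hs0 (hs hd)

theorem add_mul_le_mul_of_le {a b r₀ r : ℝ} (ha : 0 ≤ a) (hr₀ : 0 < r₀) (hr : r₀ ≤ r) :
    a + b * r ≤ (a / r₀ + b) * r := by
  have : a ≤ a / r₀ * r := by
    rw [div_mul_eq_mul_div, le_div_iff₀ hr₀]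
    exact mul_le_mul_of_nonneg_left hr ha
  linarith

theorem Compat.isStationarySuperSolAt {c C r₀ r L : ℝ} {u : ℝ → ℝ} (hcompat : Compat c u C r₀)
    (hu : W2Loc u) (hslope : |deriv u r| ≤ L) (hC : 0 ≤ C) (hr : 0 < r) (hr₀ : r < r₀) :
    IsStationarySuperSolAt c (C * (1 + r₀ * L)) u r := by
  have hL : 0 ≤ L := (abs_nonneg _).trans hslope
  refine hu.isStationarySuperSolAt_of_kappa_le (B := fun s => C * s - c) hr (by fun_prop) ?_ ?_
  · filter_upwards [Ioi_mem_nhds hr, Iio_mem_nhds hr₀] with s hs hs₀ hd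
    linarith [(abs_le.mp (hcompat s hs hs₀.le hd)).2]
  · calc (c + (C * r - c)) * √(1 + r ^ 2 * deriv u r ^ 2)
        = C * r * √(1 + r ^ 2 * deriv u r ^ 2) := by ring
      _ ≤ C * r * (1 + r * L) := by gcongr; exact sqrt_one_add_sq_mul_sq_le hr.le hslope
      _ = C * (1 + r * L) * r := by ring
      _ ≤ C * (1 + r₀ * L) * r := by gcongr

theorem KappaBdd.isStationarySuperSolAt {c K r₀ r L : ℝ} {u : ℝ → ℝ} (hK : KappaBdd u K)
    (hu : W2Loc u) (hslope : |deriv u r| ≤ L) (hr₀ : 0 < r₀) (hr : r₀ ≤ r) :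
    IsStationarySuperSolAt c (|c + K| / r₀ + |c + K| * L) u r := by
  have hr' : 0 < r := hr₀.trans_le hr
  refine hu.isStationarySuperSolAt_of_kappa_le (B := fun _ => K) hr' continuousAt_const ?_ ?_
  · filter_upwards [Ioi_mem_nhds hr'] with s hs hd using (le_abs_self _).trans (hK s hs hd)
  · calc (c + K) * √(1 + r ^ 2 * deriv u r ^ 2) ≤ |c + K| * (1 + r * L) := by
          gcongr
          · exact le_abs_self _
          · exact sqrt_one_add_sq_mul_sq_le hr'.le hslope
      _ = |c + K| + |c + K| * L * r := by ring
      _ ≤ _ := add_mul_le_mul_of_le (abs_nonneg _) hr₀ hr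

theorem LipschitzOnWith.isStationarySuperSolAt_of_deriv {c r₀ r L : ℝ} {Lg : NNReal}
    {u : ℝ → ℝ} (hLg : LipschitzOnWith Lg (deriv u) (Ioi 0)) (hu : W2Loc u)
    (hslope : |deriv u r| ≤ L) (hr₀ : 0 < r₀) (hr : r₀ ≤ r) :
    IsStationarySuperSolAt c ((|c| + 2 * L) / r₀ + (|c| * L + Lg)) u r := by
  have hr' : 0 < r := hr₀.trans_le hr
  refine hu.isStationarySuperSolAt (h := fun _ => (Lg : ℝ)) hr' continuousAt_const ?_ ?_
  · filter_upwards [Ioi_mem_nhds hr'] with s hs _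
    exact (le_abs_self _).trans (norm_deriv_le_of_lipschitzOn (Ioi_mem_nhds hs) hLg)
  · have hL : 0 ≤ L := (abs_nonneg _).trans hslope
    exact (Fbar_le hr' hslope Lg.coe_nonneg).trans
      (add_mul_le_mul_of_le (by positivity) hr₀ hr)

theorem exists_isStationarySuperSolAt_of_le {c r₀ L : ℝ} {u : ℝ → ℝ} (hu : W2Loc u)
    (hslope : ∀ r > 0, |deriv u r| ≤ L) (hreg : DerivW1inf u ∨ ∃ K : ℝ, KappaBdd u K)
    (hr₀ : 0 < r₀) : ∃ C, ∀ r ≥ r₀, IsStationarySuperSolAt c C u r := by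
  rcases hreg with ⟨-, Lg, hLg⟩ | ⟨K, hK⟩
  · exact ⟨_, fun r hr =>
      hLg.isStationarySuperSolAt_of_deriv hu (hslope r (hr₀.trans_le hr)) hr₀ hr⟩
  · exact ⟨_, fun r hr => hK.isStationarySuperSolAt hu (hslope r (hr₀.trans_le hr)) hr₀ hr⟩

theorem exists_isStationarySuperSolAt {c : ℝ} {u : ℝ → ℝ} (hu : W2Loc u)
    (hlip : ∃ L : NNReal, LipschitzOnWith L u (Ioi 0))
    (hreg : DerivW1inf u ∨ ∃ K : ℝ, KappaBdd u K)
    (hcompat : ∃ C r₀ : ℝ, 0 < C ∧ 0 < r₀ ∧ Compat c u C r₀) :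
    ∃ C > 0, ∀ r > 0, IsStationarySuperSolAt c C u r := by
  obtain ⟨L, hL⟩ := hlip
  obtain ⟨C, r₀, hC, hr₀, hcompat⟩ := hcompat
  have hslope : ∀ r > 0, |deriv u r| ≤ L := fun r hr =>
    norm_deriv_le_of_lipschitzOn (Ioi_mem_nhds hr) hL
  obtain ⟨C', hC'⟩ := exists_isStationarySuperSolAt_of_le (c := c) hu hslope hreg hr₀
  refine ⟨max (C * (1 + r₀ * L)) C', lt_max_of_lt_left (by positivity), fun r hr => ?_⟩
  rcases lt_or_ge r r₀ with hrr₀ | hrr₀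
  · exact (hcompat.isStationarySuperSolAt hu (hslope r hr) hC.le hr hrr₀).mono
      (le_max_left _ _) hr.le
  · exact (hC' r hrr₀).mono (le_max_right _ _) hr.le

theorem dom_mem_nhds {T : ℝ≥0∞} {p : ℝ × ℝ} (hp : p ∈ Dom T) (ht : 0 < p.1) : Dom T ∈ 𝓝 p := by
  have hopen : IsOpen {q : ℝ × ℝ | 0 < q.1 ∧ ENNReal.ofReal q.1 < T ∧ 0 < q.2} :=
    (isOpen_lt continuous_const continuous_fst).inter
      ((isOpen_lt (ENNReal.continuous_ofReal.comp continuous_fst) continuous_const).inter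
        (isOpen_lt continuous_const continuous_snd))
  exact mem_of_superset (hopen.mem_nhds ⟨ht, hp.2⟩) fun q hq => ⟨hq.1.le, hq.2⟩

theorem Dt_eq_of_isLocalMin {u : ℝ → ℝ} {φ : ℝ × ℝ → ℝ} {C t r : ℝ} (hφ : Differentiable ℝ φ)
    (hmin : IsLocalMin (fun p : ℝ × ℝ => u p.2 + C * p.1 - φ p) (t, r)) : Dt φ t r = C := by
  have hslice : HasDerivAt (fun s => u r + C * s - φ (s, r)) (C - Dt φ t r) t := by
    have hφt : DifferentiableAt ℝ (fun s => φ (s, r)) t := by fun_prop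
    simpa [Dt] using (((hasDerivAt_id t).const_mul C).const_add (u r)).fun_sub hφt.hasDerivAt
  have h0 := (hmin.comp_continuous (g := fun s => (s, r)) (by fun_prop)).hasDerivAt_eq_zero hslice
  linarith

theorem isSuperSol_add_mul {c C : ℝ} {T : ℝ≥0∞} {u : ℝ → ℝ} (hu : ContinuousOn u (Ioi 0))
    (hC : ∀ r > 0, IsStationarySuperSolAt c C u r) :
    IsSuperSol c T u (fun t r => u r + C * t) := by
  refine ⟨ContinuousOn.lowerSemicontinuousOn ?_, fun φ hφ t r hmem hmin => ⟨fun ht => ?_, by simp⟩⟩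
  · exact (hu.comp continuous_snd.continuousOn fun p hp => hp.2.2).add (by fun_prop)
  have hmin' := hmin.isLocalMin (dom_mem_nhds hmem ht)
  have hspace : IsLocalMin (fun ρ => u ρ - φ (t, ρ)) r :=
    Filter.Eventually.mono (hmin'.comp_continuous (g := fun ρ => (t, ρ)) (by fun_prop))
      fun ρ hρ => by simp only [Function.comp] at hρ; linarith
  rw [Dt_eq_of_isLocalMin (hφ.differentiable two_ne_zero) hmin', mul_comm]
  exact hC r hmem.2.2 (fun ρ => φ (t, ρ)) (hφ.comp (by fun_prop)) hspace

theorem LowerSemicontinuousOn.upperSemicontinuousOn_of_neg {α β : Type*} [TopologicalSpace α]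
    [AddCommGroup β] [PartialOrder β] [IsOrderedAddMonoid β] {f : α → β} {s : Set α} (h : LowerSemicontinuousOn (fun x => -f x) s) :
    UpperSemicontinuousOn f s :=
  fun x hx y hy => (h x hx (-y) (neg_lt_neg hy)).mono fun _ h => neg_lt_neg_iff.mp h

theorem IsSuperSol.isSubSol_of_neg {c : ℝ} {T : ℝ≥0∞} {u₀ : ℝ → ℝ} {u : ℝ → ℝ → ℝ}
    (h : IsSuperSol (-c) T (fun r => -u₀ r) (fun t r => -u t r)) : IsSubSol c T u₀ u := by
  refine ⟨h.1.upperSemicontinuousOn_of_neg, fun φ hφ t r hmem hmax => ?_⟩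
  obtain ⟨hpde, hinit⟩ := h.2 (fun p => -φ p) hφ.neg t r hmem
    (by simpa [neg_add_eq_sub] using hmax.neg)
  refine ⟨fun ht => ?_, fun ht => by simpa using hinit ht⟩
  have := hpde ht
  simp only [Dt, Dr, Drr, deriv.fun_neg, Fbar_neg] at this ⊢
  linarith

section Neg

variable {u : ℝ → ℝ}

theorem differentiableAt_deriv_neg_iff {s : ℝ} :
    DifferentiableAt ℝ (deriv fun x => -u x) s ↔ DifferentiableAt ℝ (deriv u) s := by
  rw [deriv.fun_neg', differentiableAt_fun_neg_iff]

theorem kappa_neg (s : ℝ) : kappa (fun x => -u x) s = -kappa u s := by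
  simp only [kappa, deriv.fun_neg', deriv.fun_neg, mul_neg, neg_sq]
  ring

theorem W2Loc.neg (hu : W2Loc u) : W2Loc fun x => -u x := by
  refine ⟨fun r hr => (hu.1 r hr).neg, fun r hr => ?_⟩
  obtain ⟨ε, hε, L, hL⟩ := hu.2 r hr
  exact ⟨ε, hε, L, by rw [deriv.fun_neg']; exact hL.neg⟩

theorem DerivW1inf.neg (hu : DerivW1inf u) : DerivW1inf fun x => -u x := by
  obtain ⟨⟨M, hM⟩, L, hL⟩ := hu
  exact ⟨⟨M, by simpa only [deriv.fun_neg', abs_neg] using hM⟩, L,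
    by rw [deriv.fun_neg']; exact hL.neg⟩

theorem KappaBdd.neg {K : ℝ} (hu : KappaBdd u K) : KappaBdd (fun x => -u x) K :=
  fun r hr hd => by
    simpa only [kappa_neg, abs_neg] using hu r hr (differentiableAt_deriv_neg_iff.mp hd)

theorem Compat.neg {c C r₀ : ℝ} (hu : Compat c u C r₀) : Compat (-c) (fun x => -u x) C r₀ :=
  fun r hr hr₀ hd => by
    simpa only [kappa_neg, ← neg_add, abs_neg] using
      hu r hr hr₀ (differentiableAt_deriv_neg_iff.mp hd)

end Neg

/-- Proposition 5.1: barriers for the Cauchy problem.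
Under the regularity hypotheses and the compatibility condition on `ū₀`, there is `C̄ > 0`
such that `ū₀(r) + C̄ t` is a viscosity super-solution and `ū₀(r) − C̄ t` a viscosity
sub-solution of (E) with initial datum `ū₀`. -/
theorem barriers_with_compatibility (c : ℝ) (u0 : ℝ → ℝ)
    (hW : W2Loc u0)
    (hlip : ∃ L : NNReal, LipschitzOnWith L u0 (Set.Ioi 0))
    (hreg : DerivW1inf u0 ∨ ∃ K : ℝ, KappaBdd u0 K)
    (hcompat : ∃ C r0 : ℝ, 0 < C ∧ 0 < r0 ∧ Compat c u0 C r0) :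
    ∃ Cb : ℝ, 0 < Cb ∧
      IsSuperSol c ⊤ u0 (fun t r => u0 r + Cb * t) ∧
      IsSubSol c ⊤ u0 (fun t r => u0 r - Cb * t) := by
  obtain ⟨C₁, hC₁, h₁⟩ := exists_isStationarySuperSolAt hW hlip hreg hcompat
  obtain ⟨C₂, -, h₂⟩ := exists_isStationarySuperSolAt (c := -c) hW.neg
    (hlip.imp fun _ hL => hL.neg) (hreg.imp DerivW1inf.neg fun ⟨K, hK⟩ => ⟨K, hK.neg⟩)
    (hcompat.imp fun _ ⟨r₀, hC, hr₀, h⟩ => ⟨r₀, hC, hr₀, h.neg⟩)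
  have hcont : ContinuousOn u0 (Ioi 0) := fun r hr =>
    (hW.1 r hr).continuousAt.continuousWithinAt
  refine ⟨max C₁ C₂, lt_max_of_lt_left hC₁,
    isSuperSol_add_mul hcont fun r hr => (h₁ r hr).mono (le_max_left _ _) hr.le,
    IsSuperSol.isSubSol_of_neg ?_⟩
  simpa only [neg_sub', sub_neg_eq_add] using isSuperSol_add_mul (u := fun x => -u0 x) hcont.neg
    fun r hr => (h₂ r hr).mono (le_max_right _ _) hr.le
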